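/- Let f(z) = √(y²−z²)√(y²−u²)/(2y) − √(w²−x²)√(w²−u²)/(2w) − u|xy−wz|/(2wy) + (w−y)/2 + |x−z|/2, where 0 ≤ u < w ≤ y, −w < x < w, and w+x−y ≤ z ≤ −w+x+y. Then f(u,w,x,y,z) ≥ 0, with equality only if (w = y and x = z) or (x = z and u = |x|). -/

import Mathlib

/-!
For fixed `u, w, x, y`, the map `z ↦ spacingFun u w x y z` is concave on `[x, y]`: there it is
a nonnegative multiple of the semicircle `√(y² - z²)`, minus a nonnegative multiple of
`|x y - w z|`, plus an affine function. After the symmetry `(x, z) ↦ (-x, -z)` we may take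
`x ≤ z ≤ x + (y - w)`, so only the endpoints matter: at `z = x` the value is nonnegative and
vanishes only if `w = y` or `u = |x|`, and at `z = x + (y - w)` it is positive once `w < y`.
Both endpoint inequalities, like the concavity of the semicircle, come down after squaring to
`√(r² - a²) √(r² - b²) ≤ r² - a b`, which is Cauchy–Schwarz for the vectors
`(√(r² - a²), a)` and `(√(r² - b²), b)`.
-/

/-- The function of five real variables from Lemma (spacingcent). -/
noncomputable def spacingFun (u w x y z : ℝ) : ℝ :=
  Real.sqrt (y ^ 2 - z ^ 2) * Real.sqrt (y ^ 2 - u ^ 2) / (2 * y) -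
    Real.sqrt (w ^ 2 - x ^ 2) * Real.sqrt (w ^ 2 - u ^ 2) / (2 * w) -
    u * |x * y - w * z| / (2 * w * y) + (w - y) / 2 + |x - z| / 2

open Set

theorem sqrt_sq_sub_sq_mul_sqrt_sq_sub_sq_le {r a b : ℝ} (ha : a ^ 2 ≤ r ^ 2)
    (hb : b ^ 2 ≤ r ^ 2) : √(r ^ 2 - a ^ 2) * √(r ^ 2 - b ^ 2) ≤ r ^ 2 - a * b := by
  rw [← Real.sqrt_mul (sub_nonneg.2 ha), Real.sqrt_le_left (by nlinarith [sq_nonneg (a - b)])]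
  nlinarith [sq_nonneg (r * (a - b))]

theorem sqrt_sq_sub_sq_mul_sqrt_sq_sub_sq_lt {r a b : ℝ} (hr : r ≠ 0) (hab : a ≠ b)
    (ha : a ^ 2 ≤ r ^ 2) (hb : b ^ 2 ≤ r ^ 2) :
    √(r ^ 2 - a ^ 2) * √(r ^ 2 - b ^ 2) < r ^ 2 - a * b := by
  have hab' : 0 < (a - b) ^ 2 := by positivity
  rw [← Real.sqrt_mul (sub_nonneg.2 ha), Real.sqrt_lt' (by nlinarith)]
  nlinarith [mul_pos (pow_pos (abs_pos.2 hr) 2) hab', sq_abs r]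

theorem concaveOn_sqrt_sq_sub_sq (r : ℝ) :
    ConcaveOn ℝ (Icc (-r) r) fun z ↦ √(r ^ 2 - z ^ 2) := by
  refine ⟨convex_Icc _ _, fun p hp q hq a b ha hb hab ↦ ?_⟩
  obtain rfl : b = 1 - a := by linarith
  have hp2 : p ^ 2 ≤ r ^ 2 := sq_le_sq' hp.1 hp.2
  have hq2 : q ^ 2 ≤ r ^ 2 := sq_le_sq' hq.1 hq.2
  have hpq := sqrt_sq_sub_sq_mul_sqrt_sq_sub_sq_le hp2 hq2
  have hgap : r ^ 2 - (a * p + (1 - a) * q) ^ 2 -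
      (a * √(r ^ 2 - p ^ 2) + (1 - a) * √(r ^ 2 - q ^ 2)) ^ 2 =
      2 * a * (1 - a) * (r ^ 2 - p * q - √(r ^ 2 - p ^ 2) * √(r ^ 2 - q ^ 2)) := by
    linear_combination (-a ^ 2) * Real.sq_sqrt (sub_nonneg.2 hp2) -
      (1 - a) ^ 2 * Real.sq_sqrt (sub_nonneg.2 hq2)
  simp only [smul_eq_mul]
  refine Real.le_sqrt_of_sq_le ?_
  nlinarith [mul_nonneg (mul_nonneg ha hb) (sub_nonneg.2 hpq)]

theorem convexOn_abs_sub_mul (c w : ℝ) : ConvexOn ℝ univ fun z ↦ |c - w * z| := by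
  refine ⟨convex_univ, fun p _ q _ a b ha hb hab ↦ ?_⟩
  simp only [smul_eq_mul]
  calc |c - w * (a * p + b * q)| = |a * (c - w * p) + b * (c - w * q)| := by
        congr 1; linear_combination -c * hab
    _ ≤ |a * (c - w * p)| + |b * (c - w * q)| := abs_add_le _ _
    _ = a * |c - w * p| + b * |c - w * q| := by
        rw [abs_mul, abs_mul, abs_of_nonneg ha, abs_of_nonneg hb]

theorem concaveOn_spacingFun {u w x y : ℝ} (hu : 0 ≤ u) (hw : 0 ≤ w) (hy : 0 ≤ y)
    (hxy : -y ≤ x) : ConcaveOn ℝ (Icc x y) (spacingFun u w x y) := by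
  have hsqrt :
      ConcaveOn ℝ (Icc x y) fun z ↦ √(y ^ 2 - u ^ 2) / (2 * y) * √(y ^ 2 - z ^ 2) :=
    ((concaveOn_sqrt_sq_sub_sq y).subset (Icc_subset_Icc hxy le_rfl) (convex_Icc _ _)).smul
      (by positivity)
  have habs : ConvexOn ℝ (Icc x y) fun z ↦ u / (2 * w * y) * |x * y - w * z| :=
    ((convexOn_abs_sub_mul (x * y) w).subset (subset_univ _) (convex_Icc x y)).smul
      (by positivity)
  have hlin : ConcaveOn ℝ (Icc x y) fun z ↦ (1 / 2 : ℝ) * z :=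
    (concaveOn_id (convex_Icc x y)).smul (by norm_num)
  refine (((hsqrt.sub habs).add hlin).add_const
    ((w - y - x) / 2 - √(w ^ 2 - x ^ 2) * √(w ^ 2 - u ^ 2) / (2 * w))).congr fun z hz ↦ ?_
  simp only [spacingFun, Pi.add_apply, Pi.sub_apply]
  rw [abs_of_nonpos (sub_nonpos.2 hz.1)]
  ring

theorem ConcaveOn.pos_of_nonneg_of_pos {s : Set ℝ} {f : ℝ → ℝ} {p q z : ℝ}
    (hf : ConcaveOn ℝ s f) (hp : p ∈ s) (hq : q ∈ s) (hz : z ∈ Ioc p q) (hfp : 0 ≤ f p)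
    (hfq : 0 < f q) : 0 < f z := by
  have hpq : 0 < q - p := by linarith [hz.1, hz.2]
  have ha : 0 ≤ (q - z) / (q - p) := div_nonneg (sub_nonneg.2 hz.2) hpq.le
  have hb : 0 < (z - p) / (q - p) := div_pos (sub_pos.2 hz.1) hpq
  have hcomb := hf.2 hp hq ha hb.le (by field_simp; ring)
  simp only [smul_eq_mul] at hcomb
  rw [show (q - z) / (q - p) * p + (z - p) / (q - p) * q = z by field_simp; ring] at hcomb
  nlinarith [mul_nonneg ha hfp, mul_pos hb hfq]

theorem spacingFun_neg (u w x y z : ℝ) : spacingFun u w (-x) y (-z) = spacingFun u w x y z := by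
  rw [spacingFun, spacingFun, neg_sq, neg_sq, ← abs_neg (-x - -z), ← abs_neg (-x * y - w * -z)]
  ring_nf

theorem spacingFun_self_self (u w x : ℝ) : spacingFun u w x w x = 0 := by
  simp [spacingFun, mul_comm]

theorem abs_mul_sub_mul_of_le {w x y : ℝ} (hwy : w ≤ y) : |x * y - w * x| = |x| * (y - w) := by
  rw [mul_comm w, ← mul_sub, abs_mul, abs_of_nonneg (sub_nonneg.2 hwy)]

theorem spacingFun_abs_self {w x y : ℝ} (hw : 0 < w) (hxw : |x| ≤ w) (hwy : w ≤ y) :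
    spacingFun |x| w x y x = 0 := by
  have hx2 : x ^ 2 ≤ w ^ 2 := sq_le_sq' (abs_le.1 hxw).1 (abs_le.1 hxw).2
  have hwy2 : w ^ 2 ≤ y ^ 2 := pow_le_pow_left₀ hw.le hwy 2
  have hy : 0 < y := hw.trans_le hwy
  rw [spacingFun, abs_mul_sub_mul_of_le hwy, ← mul_assoc, abs_mul_abs_self, sq_abs,
    Real.mul_self_sqrt (by linarith), Real.mul_self_sqrt (by linarith), sub_self, abs_zero]
  field_simp
  ring

theorem spacingFun_self_pos {u w x y : ℝ} (hu : 0 ≤ u) (huw : u < w) (hxw : |x| ≤ w)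
    (hwy : w < y) (hux : u ≠ |x|) : 0 < spacingFun u w x y x := by
  have hw : 0 < w := hu.trans_lt huw
  have hy : 0 < y := hw.trans hwy
  have hu2 : u ^ 2 ≤ w ^ 2 := pow_le_pow_left₀ hu huw.le 2
  have hx2 : x ^ 2 ≤ w ^ 2 := sq_le_sq' (abs_le.1 hxw).1 (abs_le.1 hxw).2
  have hwy2 : w ^ 2 ≤ y ^ 2 := pow_le_pow_left₀ hw.le hwy.le 2
  set P := √(y ^ 2 - x ^ 2) * √(y ^ 2 - u ^ 2)
  set Q := √(w ^ 2 - x ^ 2) * √(w ^ 2 - u ^ 2)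
  have hQ : Q < w ^ 2 - |x| * u := by
    simpa only [sq_abs] using
      sqrt_sq_sub_sq_mul_sqrt_sq_sub_sq_lt hw.ne' (Ne.symm hux) (by rwa [sq_abs]) hu2
  have hsq : (w * P) ^ 2 - (y * Q + (y - w) * (w * y + u * |x|)) ^ 2 =
      2 * y * (y - w) * (w * y + u * |x|) * (w ^ 2 - |x| * u - Q) := by
    have hP2 : P ^ 2 = (y ^ 2 - |x| ^ 2) * (y ^ 2 - u ^ 2) := by
      rw [mul_pow, Real.sq_sqrt (by linarith), Real.sq_sqrt (by linarith), sq_abs]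
    have hQ2 : Q ^ 2 = (w ^ 2 - |x| ^ 2) * (w ^ 2 - u ^ 2) := by
      rw [mul_pow, Real.sq_sqrt (by linarith), Real.sq_sqrt (by linarith), sq_abs]
    linear_combination w ^ 2 * hP2 - y ^ 2 * hQ2
  have hlt : y * Q + (y - w) * (w * y + u * |x|) < w * P := by
    refine (sq_lt_sq₀ (by positivity) (by positivity)).1 (sub_pos.1 ?_)
    rw [hsq]
    have := sub_pos.2 hQ
    have := sub_pos.2 hwy
    positivity
  have hf : spacingFun u w x y x =
      (w * P - (y * Q + (y - w) * (w * y + u * |x|))) / (2 * w * y) := by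
    rw [spacingFun, abs_mul_sub_mul_of_le hwy.le, sub_self, abs_zero]
    field_simp
    ring
  rw [hf]
  exact div_pos (sub_pos.2 hlt) (by positivity)

theorem spacingFun_self_nonneg {u w x y : ℝ} (hu : 0 ≤ u) (huw : u < w) (hxw : |x| ≤ w)
    (hwy : w ≤ y) : 0 ≤ spacingFun u w x y x := by
  rcases hwy.eq_or_lt with rfl | hwy
  · rw [spacingFun_self_self]
  rcases eq_or_ne u |x| with rfl | hux
  · rw [spacingFun_abs_self (hu.trans_lt huw) hxw hwy.le]
  exact (spacingFun_self_pos hu huw hxw hwy hux).le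

theorem spacingFun_add_sub_pos {u w x y : ℝ} (hu : 0 ≤ u) (huw : u < w) (hwy : w < y)
    (hx₁ : -w < x) (hx₂ : x < w) : 0 < spacingFun u w x y (x + (y - w)) := by
  have hw : 0 < w := hu.trans_lt huw
  have hy : 0 < y := hw.trans hwy
  have hu2 : u ^ 2 ≤ w ^ 2 := pow_le_pow_left₀ hu huw.le 2
  have hx2 : x ^ 2 ≤ w ^ 2 := sq_le_sq' hx₁.le hx₂.le
  set P := √(y ^ 2 - (x + (y - w)) ^ 2) * √(y ^ 2 - u ^ 2)
  set Q := √(w ^ 2 - x ^ 2) * √(w ^ 2 - u ^ 2)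
  have huQ : u * Q < w ^ 2 * y + u ^ 2 * x := by
    have hQ : Q ≤ w ^ 2 - x * -u := by
      simpa only [neg_sq] using sqrt_sq_sub_sq_mul_sqrt_sq_sub_sq_le (b := -u) hx2 (by rwa [neg_sq])
    have : u * w ^ 2 < y * w ^ 2 := mul_lt_mul_of_pos_right (huw.trans hwy) (by positivity)
    nlinarith [mul_le_mul_of_nonneg_left hQ hu]
  have hsq : (w * P) ^ 2 - (y * Q + u * (w - x) * (y - w)) ^ 2 =
      2 * y * (y - w) * (w - x) * (w ^ 2 * y + u ^ 2 * x - u * Q) := by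
    have hP2 : P ^ 2 = (y ^ 2 - (x + (y - w)) ^ 2) * (y ^ 2 - u ^ 2) := by
      rw [mul_pow, Real.sq_sqrt (by nlinarith), Real.sq_sqrt (by nlinarith)]
    have hQ2 : Q ^ 2 = (w ^ 2 - x ^ 2) * (w ^ 2 - u ^ 2) := by
      rw [mul_pow, Real.sq_sqrt (by linarith), Real.sq_sqrt (by linarith)]
    linear_combination w ^ 2 * hP2 - y ^ 2 * hQ2
  have hlt : y * Q + u * (w - x) * (y - w) < w * P := by
    have : 0 < w - x := sub_pos.2 hx₂
    have : 0 < y - w := sub_pos.2 hwy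
    refine (sq_lt_sq₀ (by positivity) (by positivity)).1 (sub_pos.1 ?_)
    rw [hsq]
    have := sub_pos.2 huQ
    positivity
  have hf : spacingFun u w x y (x + (y - w)) =
      (w * P - (y * Q + u * (w - x) * (y - w))) / (2 * w * y) := by
    rw [spacingFun, show x * y - w * (x + (y - w)) = (x - w) * (y - w) by ring,
      show x - (x + (y - w)) = -(y - w) by ring, abs_neg, abs_mul, abs_of_neg (sub_neg.2 hx₂),
      abs_of_pos (sub_pos.2 hwy)]
    field_simp
    ring
  rw [hf]
  exact div_pos (sub_pos.2 hlt) (by positivity)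

theorem spacingFun_pos_of_lt {u w x y z : ℝ} (hu : 0 ≤ u) (huw : u < w) (hwy : w < y)
    (hx₁ : -w < x) (hx₂ : x < w) (hxz : x < z) (hz : z ≤ x + (y - w)) :
    0 < spacingFun u w x y z := by
  have hw : 0 < w := hu.trans_lt huw
  exact (concaveOn_spacingFun hu hw.le (hw.trans hwy).le (by linarith)).pos_of_nonneg_of_pos
    (left_mem_Icc.2 (by linarith)) ⟨by linarith, by linarith⟩ ⟨hxz, hz⟩
    (spacingFun_self_nonneg hu huw (abs_le.2 ⟨hx₁.le, hx₂.le⟩) hwy.le)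
    (spacingFun_add_sub_pos hu huw hwy hx₁ hx₂)

/-- The five-variable inequality at the heart of Lemma (spacingcent):
f(u,w,x,y,z) ≥ 0 on the stated domain, with equality only if
(w = y and x = z) or (x = z and u = |x|). -/
theorem spacingFun_nonneg (u w x y z : ℝ)
    (hu : 0 ≤ u) (huw : u < w) (hwy : w ≤ y)
    (hx₁ : -w < x) (hx₂ : x < w)
    (hz₁ : w + x - y ≤ z) (hz₂ : z ≤ -w + x + y) :
    0 ≤ spacingFun u w x y z ∧
      (spacingFun u w x y z = 0 → (w = y ∧ x = z) ∨ (x = z ∧ u = |x|)) := by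
  rcases hwy.eq_or_lt with rfl | hwy
  · obtain rfl : z = x := by linarith
    simp [spacingFun_self_self]
  have hxw : |x| ≤ w := abs_le.2 ⟨hx₁.le, hx₂.le⟩
  by_cases hxz : x = z
  · subst hxz
    refine ⟨spacingFun_self_nonneg hu huw hxw hwy.le, fun h0 ↦ Or.inr ⟨rfl, ?_⟩⟩
    by_contra hux
    exact (spacingFun_self_pos hu huw hxw hwy hux).ne' h0
  have hpos : 0 < spacingFun u w x y z := by
    rcases lt_or_gt_of_ne hxz with hxz | hzx
    · exact spacingFun_pos_of_lt hu huw hwy hx₁ hx₂ hxz (by linarith)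
    · rw [← spacingFun_neg]
      exact spacingFun_pos_of_lt hu huw hwy (by linarith) (by linarith) (by linarith) (by linarith)
  exact ⟨hpos.le, fun h0 ↦ absurd h0 hpos.ne'⟩
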